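/- arXiv:1301.3790 — 2 statements merged into one kernel-verified Lean document; each statement's English description precedes it below -/
import Mathlib

section
/- Let f : X → Y be a one-block factor map between subshifts and let m be a magic word for f at coordinate i (i.e. the number of symbols appearing at position i among f-preimages of m is minimal over all Y-words and coordinates). Then for any Y-word of the form vmw extending m and any symbol c appearing at position i in some f-preimage of m, there exists an f-preimage VMW of vmw whose symbol at the position corresponding to coordinate i of m equals c. -/
open Set Filter

section SymbolicDynamics

variable {A B C D : Type*}

/-- The shift map on bi-infinite configurations. -/
def shiftMap (x : ℤ → A) : ℤ → A := fun i => x (i + 1)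

/-- The inverse shift iterated `n` times. -/
def shiftInv (x : ℤ → A) (n : ℕ) : ℤ → A := fun i => x (i - n)

/-- A word appears in a configuration (at some position). -/
def WordAppears (w : List A) (x : ℤ → A) : Prop :=
  ∃ i : ℤ, ∀ k : Fin w.length, x (i + (k.val : ℤ)) = w.get k

/-- A word belongs to the language of a set of configurations. -/
def WordIn (w : List A) (X : Set (ℤ → A)) : Prop :=
  ∃ x ∈ X, WordAppears w x

/-- A subshift: a (sequentially, equivalently topologically) closed and
shift-invariant subset of the full shift. -/
def IsSubshift (X : Set (ℤ → A)) : Prop :=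
  (∀ x : ℤ → A, (∀ n : ℕ, ∃ y ∈ X, ∀ i : ℤ, |i| ≤ (n : ℤ) → y i = x i) → x ∈ X) ∧
  shiftMap '' X = X

/-- A subshift of finite type: defined by finitely many forbidden words. -/
def IsSFT (X : Set (ℤ → A)) : Prop :=
  ∃ F : Set (List A), F.Finite ∧ X = {x | ∀ w ∈ F, ¬ WordAppears w x}

/-- A one-step SFT: forbidden words of length at most 2. -/
def IsOneStepSFT (X : Set (ℤ → A)) : Prop :=
  ∃ F : Set (List A), F.Finite ∧ (∀ w ∈ F, w.length ≤ 2) ∧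
    X = {x | ∀ w ∈ F, ¬ WordAppears w x}

/-- A sliding block code: given by a local rule (equivalently, continuous for the
product topology) and shift-commuting (Curtis–Hedlund–Lyndon). -/
def IsSlidingBlockCode (f : (ℤ → A) → (ℤ → B)) : Prop :=
  (∃ r : ℕ, ∀ x y : ℤ → A, ∀ i : ℤ,
      (∀ j : ℤ, |j - i| ≤ (r : ℤ) → x j = y j) → f x i = f y i) ∧
  ∀ x, f (shiftMap x) = shiftMap (f x)

/-- A factor map from `X` onto `Y`: a sliding block code mapping `X` onto `Y`. -/
def IsFactorMapOn (f : (ℤ → A) → (ℤ → B)) (X : Set (ℤ → A)) (Y : Set (ℤ → B)) : Prop :=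
  IsSlidingBlockCode f ∧ f '' X = Y

/-- A one-block map with block rule `g`. -/
def IsOneBlock (f : (ℤ → A) → (ℤ → B)) (g : A → B) : Prop :=
  ∀ x i, f x i = g (x i)

/-- A sofic shift: the image of an SFT under a factor map. -/
def IsSofic (Y : Set (ℤ → B)) : Prop :=
  ∃ (A' : Type) (_ : Fintype A') (S : Set (ℤ → A')) (f : (ℤ → A') → (ℤ → B)),
    IsSFT S ∧ IsFactorMapOn f S Y

/-- Irreducibility of a subshift: any two points can be glued with a bounded gap. -/
def ShiftIrreducible (X : Set (ℤ → A)) : Prop :=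
  ∀ x ∈ X, ∀ y ∈ X, ∃ N : ℕ, ∃ z ∈ X,
    (∀ i : ℤ, i ≤ 0 → z i = x i) ∧ ∀ i : ℤ, (N : ℤ) ≤ i → z i = y i

/-- Mixing: gluing with any sufficiently large uniform gap. -/
def ShiftMixing (X : Set (ℤ → A)) : Prop :=
  ∃ N : ℕ, ∀ k : ℕ, N ≤ k → ∀ x ∈ X, ∀ y ∈ X, ∃ z ∈ X,
    (∀ i : ℤ, i ≤ 0 → z i = x i) ∧ ∀ i : ℤ, (k : ℤ) ≤ i → z i = y i

/-- A left-transitive point: its backward shift-orbit is dense in `X`. -/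
def LeftTransitive (X : Set (ℤ → A)) (x : ℤ → A) : Prop :=
  x ∈ X ∧ ∀ y ∈ X, ∀ n : ℕ, ∃ k : ℕ, ∀ i : ℤ, |i| ≤ (n : ℤ) → shiftInv x k i = y i

/-- A right-transitive point: its forward shift-orbit is dense in `X`. -/
def RightTransitive (X : Set (ℤ → A)) (x : ℤ → A) : Prop :=
  x ∈ X ∧ ∀ y ∈ X, ∀ n : ℕ, ∃ k : ℕ, ∀ i : ℤ, |i| ≤ (n : ℤ) → shiftMap^[k] x i = y i

/-- Left-asymptotic configurations: they agree on all sufficiently negative coordinates. -/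
def LeftAsymptotic (x y : ℤ → A) : Prop := ∃ n : ℤ, ∀ i : ℤ, i ≤ n → x i = y i

/-- Right-asymptotic configurations. -/
def RightAsymptotic (x y : ℤ → A) : Prop := ∃ n : ℤ, ∀ i : ℤ, n ≤ i → x i = y i

/-- Right-closing: never collapses two left-asymptotic points. -/
def RightClosing (f : (ℤ → A) → (ℤ → B)) (X : Set (ℤ → A)) : Prop :=
  ∀ x ∈ X, ∀ y ∈ X, LeftAsymptotic x y → f x = f y → x = y

/-- Right-closing almost everywhere: never collapses two left-transitive
left-asymptotic points. -/
def RightClosingAE (f : (ℤ → A) → (ℤ → B)) (X : Set (ℤ → A)) : Prop :=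
  ∀ x y, LeftTransitive X x → LeftTransitive X y → LeftAsymptotic x y → f x = f y → x = y

/-- Left-closing: never collapses two right-asymptotic points. -/
def LeftClosing (f : (ℤ → A) → (ℤ → B)) (X : Set (ℤ → A)) : Prop :=
  ∀ x ∈ X, ∀ y ∈ X, RightAsymptotic x y → f x = f y → x = y

/-- Right-continuing (everywhere) with retract `n`. -/
def RightContinuingRet (f : (ℤ → A) → (ℤ → B)) (X : Set (ℤ → A)) (Y : Set (ℤ → B))
    (n : ℤ) : Prop :=
  ∀ x ∈ X, ∀ y ∈ Y, (∀ i : ℤ, i ≤ n → f x i = y i) →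
    ∃ x' ∈ X, (∀ i : ℤ, i ≤ 0 → x' i = x i) ∧ f x' = y

/-- Right-continuing almost everywhere with retract `n` (`y` left-transitive). -/
def RightContinuingAE (f : (ℤ → A) → (ℤ → B)) (X : Set (ℤ → A)) (Y : Set (ℤ → B))
    (n : ℤ) : Prop :=
  ∀ x ∈ X, ∀ y, LeftTransitive Y y → (∀ i : ℤ, i ≤ n → f x i = y i) →
    ∃ x' ∈ X, (∀ i : ℤ, i ≤ 0 → x' i = x i) ∧ f x' = y

/-- Left-continuing almost everywhere with retract `n` (`y` right-transitive);
agreement is required on coordinates `≥ n`. -/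
def LeftContinuingAE (f : (ℤ → A) → (ℤ → B)) (X : Set (ℤ → A)) (Y : Set (ℤ → B))
    (n : ℤ) : Prop :=
  ∀ x ∈ X, ∀ y, RightTransitive Y y → (∀ i : ℤ, n ≤ i → f x i = y i) →
    ∃ x' ∈ X, (∀ i : ℤ, 0 ≤ i → x' i = x i) ∧ f x' = y

/-- A one-block map with rule `g` is right-resolving on `X`. -/
def RightResolving (X : Set (ℤ → A)) (g : A → B) : Prop :=
  ∀ a b c : A, WordIn [a, b] X → WordIn [a, c] X → g b = g c → b = c

/-- The `g`-follower of a symbol `a`. -/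
def follower (X : Set (ℤ → A)) (g : A → B) (a : A) : Set (List B) :=
  {m | ∃ w : List A, WordIn (a :: w) X ∧ m = (a :: w).map g}

/-- Follower-separated pair: distinct symbols have distinct followers. -/
def FollowerSeparated (X : Set (ℤ → A)) (g : A → B) : Prop :=
  ∀ a b : A, WordIn [a] X → WordIn [b] X → follower X g a = follower X g b → a = b

/-- The minimal right-resolving (Fischer) cover of an irreducible sofic shift:
an irreducible SFT together with a one-block right-resolving follower-separated
factor map onto `Y`. -/
def IsFischerCover (Sig : Set (ℤ → C)) (piR : (ℤ → C) → (ℤ → B)) (g : C → B)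
    (Y : Set (ℤ → B)) : Prop :=
  IsSFT Sig ∧ ShiftIrreducible Sig ∧ IsFactorMapOn piR Sig Y ∧ IsOneBlock piR g ∧
    RightResolving Sig g ∧ FollowerSeparated Sig g

/-- Almost of finite type: the minimal right-resolving cover is also left-closing. -/
def IsAFT (Y : Set (ℤ → B)) : Prop :=
  ∃ (C' : Type) (_ : Fintype C') (Sig : Set (ℤ → C'))
    (piR : (ℤ → C') → (ℤ → B)) (g : C' → B),
    IsFischerCover Sig piR g Y ∧ LeftClosing piR Sig

/-- Number of words of length `n` in the language of `X`. -/
noncomputable def langCard (X : Set (ℤ → A)) (n : ℕ) : ℕ :=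
  Nat.card {w : List A // w.length = n ∧ WordIn w X}

/-- Topological entropy of a subshift. -/
noncomputable def subshiftEntropy (X : Set (ℤ → A)) : ℝ :=
  Filter.limsup (fun n : ℕ => Real.log (langCard X n) / (n : ℝ)) Filter.atTop

/-- The limit set of a cellular automaton. -/
def limitSet (f : (ℤ → A) → (ℤ → A)) : Set (ℤ → A) :=
  ⋂ n : ℕ, f^[n] '' Set.univ

/-- Symbols appearing at position `i` among `g`-preimages (in the language of `X`)
of the word `m`. -/
def preimSymbols (X : Set (ℤ → A)) (g : A → B) (m : List B) (i : ℕ) : Set A :=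
  {c | ∃ Cw : List A, WordIn Cw X ∧ Cw.map g = m ∧ Cw[i]? = some c}

/-- The number of symbols seen at position `i` of preimages of `m`. -/
noncomputable def dstar (X : Set (ℤ → A)) (g : A → B) (m : List B) (i : ℕ) : ℕ :=
  Nat.card (preimSymbols X g m i)

/-- `m` is a magic word at coordinate `i` for the one-block map with rule `g`
from `X` onto `Y`: `dstar` is minimal over all `Y`-words and coordinates. -/
def IsMagicAt (X : Set (ℤ → A)) (g : A → B) (Y : Set (ℤ → B)) (m : List B) (i : ℕ) : Prop :=
  WordIn m Y ∧ i < m.length ∧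
    ∀ (m' : List B) (j : ℕ), WordIn m' Y → j < m'.length →
      dstar X g m i ≤ dstar X g m' j

/-- `Y` has a receptive fixed point: a shift-fixed point `∞a∞ ∈ Y` together with
magic words `m1, m2` for the Fischer cover such that `m1 aⁿ m2` is a `Y`-word
for every `n ≥ 1`. -/
def HasReceptiveFixedPoint (Y : Set (ℤ → B)) : Prop :=
  ∃ (C' : Type) (_ : Fintype C') (Sig : Set (ℤ → C'))
    (piR : (ℤ → C') → (ℤ → B)) (g : C' → B),
    IsFischerCover Sig piR g Y ∧
    ∃ (a : B) (m1 m2 : List B) (i1 i2 : ℕ),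
      (fun _ : ℤ => a) ∈ Y ∧ IsMagicAt Sig g Y m1 i1 ∧ IsMagicAt Sig g Y m2 i2 ∧
      ∀ n : ℕ, 1 ≤ n → WordIn (m1 ++ List.replicate n a ++ m2) Y

/-- Periodic point condition `P(U) → P(V)`: every periodic point of `U` admits a
periodic point of `V` whose period divides its period. -/
def PeriodicPointsMap (U : Set (ℤ → A)) (V : Set (ℤ → B)) : Prop :=
  ∀ x ∈ U, ∀ p : ℕ, 1 ≤ p → shiftMap^[p] x = x →
    ∃ y ∈ V, ∃ q : ℕ, 1 ≤ q ∧ shiftMap^[q] y = y ∧ q ∣ p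

/-- Finite-to-one map on `X`. -/
def FiniteToOne (f : (ℤ → A) → (ℤ → B)) (X : Set (ℤ → A)) : Prop :=
  ∀ y : ℤ → B, {x ∈ X | f x = y}.Finite

/-- `Y` is a factor of a full shift. -/
def FactorOfFullShift (Y : Set (ℤ → B)) : Prop :=
  ∃ (A' : Type) (_ : Fintype A') (f : (ℤ → A') → (ℤ → B)),
    IsFactorMapOn f (Set.univ : Set (ℤ → A')) Y

end SymbolicDynamics

/-- preimages of extensions of a magic word realize every symbol of
the magic preimage set at the magic coordinate. -/
theorem magic_word_extension {A B : Type*} [Fintype A] [Fintype B]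
    (X : Set (ℤ → A)) (Y : Set (ℤ → B)) (f : (ℤ → A) → (ℤ → B)) (g : A → B)
    (hX : IsSubshift X) (hY : IsSubshift Y)
    (hf : IsFactorMapOn f X Y) (h1b : IsOneBlock f g)
    (m : List B) (i : ℕ) (hm : IsMagicAt X g Y m i) :
    ∀ v w : List B, WordIn (v ++ m ++ w) Y →
      ∀ c ∈ preimSymbols X g m i,
        ∃ Cw : List A, WordIn Cw X ∧ Cw.map g = v ++ m ++ w ∧
          Cw[v.length + i]? = some c := by
  intro v w hvw c hc
  have hi : i < m.length := hm.2.1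
  have hS : preimSymbols X g (v ++ m ++ w) (v.length + i) ⊆ preimSymbols X g m i := by
    rintro a ⟨Cw, ⟨x, hx, j, hj⟩, hmap, hget⟩
    have hlen : Cw.length = v.length + m.length + w.length := by
      have := congrArg List.length hmap
      simp at this
      omega
    have hmlen : ((Cw.drop v.length).take m.length).length = m.length := by
      simp [hlen]
      omega
    refine ⟨(Cw.drop v.length).take m.length, ⟨x, hx, j + (v.length : ℤ), ?_⟩, ?_, ?_⟩
    · intro k
      have hk : (k : ℕ) < m.length := by have := k.2; omega
      have hk2 : v.length + (k : ℕ) < Cw.length := by omega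
      have hget2 : ((Cw.drop v.length).take m.length).get k = Cw.get ⟨v.length + k, hk2⟩ := by
        simp [List.get_eq_getElem, List.getElem_take, List.getElem_drop]
      rw [hget2]
      have := hj ⟨v.length + k, by omega⟩
      simp only at this
      rw [← this]
      congr 1
      push_cast
      ring
    · have : (Cw.map g).drop v.length = m ++ w := by
        rw [hmap, List.append_assoc, List.drop_append]
        simp
      calc ((Cw.drop v.length).take m.length).map g
          = (((Cw.map g).drop v.length).take m.length) := by
            rw [List.map_take, List.map_drop]
        _ = (m ++ w).take m.length := by rw [this]
        _ = m := List.take_left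
    · rw [List.getElem?_take_of_lt hi, List.getElem?_drop]
      exact hget
  have hle : dstar X g m i ≤ dstar X g (v ++ m ++ w) (v.length + i) :=
    hm.2.2 _ _ hvw (by simp; omega)
  have heq : preimSymbols X g (v ++ m ++ w) (v.length + i) = preimSymbols X g m i := by
    apply Set.eq_of_subset_of_ncard_le hS _ (Set.toFinite _)
    rw [← Nat.card_coe_set_eq, ← Nat.card_coe_set_eq]
    exact hle
  rw [← heq] at hc
  exact hc
end

section
/- Let π_R : Σ → Y be the minimal right-resolving cover of an irreducible sofic shift Y, and suppose x' , y' ∈ Σ and the images π_R(x'), π_R(y') are left-transitive and agree on all coordinates i ≤ N. If π_R is one-to-one almost everywhere (as the Fischer cover is), then x'_i = y'_i for all i ≤ N. -/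
open Set Filter

section Aux

open Filter

private lemma ultra_fiber {α : Type*} (U : Ultrafilter ℕ) (f : ℕ → α) (S : Finset α)
    (h : {n | f n ∈ S} ∈ U) : ∃ c ∈ S, {n | f n = c} ∈ U := by
  classical
  induction S using Finset.induction_on with
  | empty =>
    exfalso
    have : ({n | f n ∈ (∅ : Finset α)} : Set ℕ) = ∅ := by simp
    rw [this] at h
    exact Filter.empty_notMem (↑U : Filter ℕ) h
  | @insert a s ha ih =>
    have : ({n | f n ∈ insert a s} : Set ℕ) = {n | f n = a} ∪ {n | f n ∈ s} := by
      ext n; simp [Finset.mem_insert]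
    rw [this] at h
    rcases Ultrafilter.union_mem_iff.mp h with h1 | h2
    · exact ⟨a, Finset.mem_insert_self a s, h1⟩
    · obtain ⟨c, hc, hcU⟩ := ih h2
      exact ⟨c, Finset.mem_insert_of_mem hc, hcU⟩

private lemma shiftInv_avoids {A : Type*} {F : Set (List A)} {x : ℤ → A}
    (hx : ∀ w ∈ F, ¬ WordAppears w x) (m : ℕ) :
    ∀ w ∈ F, ¬ WordAppears w (shiftInv x m) := by
  intro w hw ⟨i, hi⟩
  refine hx w hw ⟨i - m, fun k => ?_⟩
  have := hi k
  simpa [shiftInv, sub_add_eq_add_sub] using this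

private lemma wordIn_pair {A : Type*} {X : Set (ℤ → A)} {x : ℤ → A} (hx : x ∈ X) (j : ℤ) :
    WordIn [x j, x (j + 1)] X := by
  refine ⟨x, hx, j, fun k => ?_⟩
  fin_cases k <;> simp

end Aux
/-- lifts through the Fischer cover of left-transitive points
agreeing on coordinates `≤ N` themselves agree on coordinates `≤ N`, when the
cover is one-to-one almost everywhere. -/
theorem fischer_lift_agreement {B C : Type*} [Fintype B] [Fintype C]
    (Y : Set (ℤ → B)) (Sig : Set (ℤ → C)) (piR : (ℤ → C) → (ℤ → B)) (g : C → B)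
    (hY : IsSubshift Y) (hYi : ShiftIrreducible Y) (hYs : IsSofic Y)
    (hcover : IsFischerCover Sig piR g Y)
    (h11 : ∀ y, LeftTransitive Y y → ∃! x, x ∈ Sig ∧ piR x = y)
    (x' y' : ℤ → C) (hx' : x' ∈ Sig) (hy' : y' ∈ Sig)
    (hxt : LeftTransitive Y (piR x')) (hyt : LeftTransitive Y (piR y'))
    (N : ℤ) (hagree : ∀ i : ℤ, i ≤ N → piR x' i = piR y' i) :
    ∀ i : ℤ, i ≤ N → x' i = y' i := by
  classical
  intro i0 hi0N
  by_contra hne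
  obtain ⟨hSFT, hSigIrr, hfac, hone, hres, hfs⟩ := hcover
  obtain ⟨F, hFfin, hFeq⟩ := hSFT
  have hSigInv : ∀ x ∈ Sig, ∀ m : ℕ, shiftInv x m ∈ Sig := by
    intro x hx m
    rw [hFeq] at hx ⊢
    exact shiftInv_avoids hx m
  -- forward propagation of agreement (right-resolving)
  have hstep : ∀ (j : ℤ), x' j = y' j → ∀ d : ℕ, j + d ≤ N → x' (j + d) = y' (j + d) := by
    intro j hj d
    induction d with
    | zero => intro _; simpa using hj
    | succ d ih =>
      intro hd
      have hd' : j + (d : ℤ) ≤ N := by push_cast at hd ⊢; omega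
      have hprev := ih hd'
      have harg : j + ((d + 1 : ℕ) : ℤ) = (j + (d : ℤ)) + 1 := by push_cast; ring
      rw [harg]
      have hpair2 : WordIn [x' (j + (d : ℤ)), y' (j + (d : ℤ) + 1)] Sig := by
        have h := wordIn_pair hy' (j + (d : ℤ))
        rwa [← hprev] at h
      have hg : g (x' (j + (d : ℤ) + 1)) = g (y' (j + (d : ℤ) + 1)) := by
        rw [← hone x', ← hone y']
        exact hagree _ (by push_cast at hd; omega)
      exact hres (x' (j + (d : ℤ))) _ _ (wordIn_pair hx' (j + (d : ℤ))) hpair2 hg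
  have hdiff : ∀ j : ℤ, j ≤ i0 → x' j ≠ y' j := by
    intro j hj hj'
    apply hne
    have h := hstep j hj' (i0 - j).toNat (by omega)
    rwa [show j + ((i0 - j).toNat : ℤ) = i0 by omega] at h
  -- ultrafilter setup
  set U : Ultrafilter ℕ := Ultrafilter.of atTop with hUdef
  have hatTop : ∀ s ∈ (atTop : Filter ℕ), s ∈ U := fun s hs => Ultrafilter.of_le atTop hs
  have habs : ∀ i : ℤ, {n : ℕ | |i| ≤ (n : ℤ)} ∈ U := by
    intro i
    apply hatTop
    refine Filter.mem_atTop_sets.2 ⟨|i|.toNat, fun n hn => ?_⟩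
    have h1 : (|i|.toNat : ℤ) ≤ n := by exact_mod_cast hn
    exact le_trans (Int.self_le_toNat _) h1
  have hxY : piR x' ∈ Y := hxt.1
  have hsmY : shiftMap (piR x') ∈ Y := by
    rw [← hY.2]; exact ⟨piR x', hxY, rfl⟩
  have hsmT : LeftTransitive Y (shiftMap (piR x')) := by
    refine ⟨hsmY, fun y hy n => ?_⟩
    obtain ⟨k, hk⟩ := hxt.2 y hy n
    refine ⟨k + 1, fun i hi => ?_⟩
    have h := hk i hi
    simp only [shiftInv, shiftMap] at h ⊢
    rw [show i - ((k + 1 : ℕ) : ℤ) + 1 = i - k by push_cast; ring]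
    exact h
  choose k hk using fun n : ℕ => hxt.2 (shiftMap (piR x')) hsmY n
  by_cases hA : ∀ M : ℕ, {n | M ≤ k n} ∈ U
  · -- Case A : the shifts go to infinity along U
    have hu : ∀ i : ℤ, ∃ c : C, {n | x' (i - k n) = c} ∈ U := by
      intro i
      obtain ⟨c, _, hc⟩ := ultra_fiber U (fun n => x' (i - k n)) Finset.univ
        (by simp only [Finset.mem_univ, Set.setOf_true]; exact Filter.univ_mem)
      exact ⟨c, hc⟩
    have hv : ∀ i : ℤ, ∃ c : C, {n | y' (i - k n) = c} ∈ U := by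
      intro i
      obtain ⟨c, _, hc⟩ := ultra_fiber U (fun n => y' (i - k n)) Finset.univ
        (by simp only [Finset.mem_univ, Set.setOf_true]; exact Filter.univ_mem)
      exact ⟨c, hc⟩
    set u : ℤ → C := fun i => (hu i).choose with hudef
    set v : ℤ → C := fun i => (hv i).choose with hvdef
    have hup : ∀ i, {n | x' (i - k n) = u i} ∈ U := fun i => (hu i).choose_spec
    have hvp : ∀ i, {n | y' (i - k n) = v i} ∈ U := fun i => (hv i).choose_spec
    have memSig : ∀ (z w : ℤ → C), w ∈ Sig →
        (∀ i, {n | w (i - k n) = z i} ∈ U) → z ∈ Sig := by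
      intro z w hw hz
      rw [hFeq]
      show ∀ wd ∈ F, ¬ WordAppears wd z
      rintro wd hwd ⟨i, hi⟩
      have hall : ∀ᶠ n in (U : Filter ℕ),
          ∀ kk : Fin wd.length, w (i + (kk.val : ℤ) - k n) = z (i + (kk.val : ℤ)) :=
        Filter.eventually_all.2 fun kk => hz (i + (kk.val : ℤ))
      obtain ⟨n, hn⟩ := hall.exists
      have happ : WordAppears wd (shiftInv w (k n)) := by
        refine ⟨i, fun kk => ?_⟩
        show w (i + (kk.val : ℤ) - k n) = wd.get kk
        rw [hn kk]
        exact hi kk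
      have hwn : shiftInv w (k n) ∈ Sig := hSigInv w hw (k n)
      rw [hFeq] at hwn
      exact hwn wd hwd happ
    have huSig : u ∈ Sig := memSig u x' hx' hup
    have hvSig : v ∈ Sig := memSig v y' hy' hvp
    have hpu : piR u = shiftMap (piR x') := by
      funext i
      obtain ⟨n, hn1, hn2⟩ := Filter.nonempty_of_mem (Filter.inter_mem (hup i) (habs i))
      have hn1' : x' (i - k n) = u i := hn1
      rw [hone u i, ← hn1', ← hone x' (i - k n)]
      exact hk n i hn2
    have hpv : piR v = shiftMap (piR x') := by
      funext i
      obtain ⟨n, hn1, hn2, hn3⟩ := Filter.nonempty_of_mem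
        (Filter.inter_mem (hvp i) (Filter.inter_mem (habs i) (hA (i - N).toNat)))
      have hn1' : y' (i - k n) = v i := hn1
      have hn3' : ((i - N).toNat : ℤ) ≤ k n := by exact_mod_cast hn3
      have hkn : i - (k n : ℤ) ≤ N := by
        have h2 := Int.self_le_toNat (i - N)
        omega
      rw [hone v i, ← hn1', ← hone y' (i - k n), ← hagree _ hkn]
      exact hk n i hn2
    obtain ⟨z, _, huniq⟩ := h11 (shiftMap (piR x')) hsmT
    have huv : u = v := by
      rw [huniq u ⟨huSig, hpu⟩, huniq v ⟨hvSig, hpv⟩]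
    obtain ⟨n, hn1, hn2, hn3⟩ := Filter.nonempty_of_mem
      (Filter.inter_mem (hup 0) (Filter.inter_mem (hvp 0) (hA (-i0).toNat)))
    have hn1' : x' (0 - (k n : ℤ)) = u 0 := hn1
    have hn2' : y' (0 - (k n : ℤ)) = v 0 := hn2
    have hn3' : ((-i0).toNat : ℤ) ≤ k n := by exact_mod_cast hn3
    have hd : x' (0 - (k n : ℤ)) ≠ y' (0 - (k n : ℤ)) := by
      apply hdiff
      have := Int.self_le_toNat (-i0)
      omega
    rw [hn1', hn2', huv] at hd
    exact hd rfl
  · -- Case B : the shifts are bounded along U, so piR x' is periodic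
    push_neg at hA
    obtain ⟨M, hM⟩ := hA
    have hcomp : {n | k n < M} ∈ U := by
      have h1 : ({n | M ≤ k n} : Set ℕ)ᶜ ∈ U := Ultrafilter.compl_mem_iff_notMem.2 hM
      have h2 : ({n | M ≤ k n} : Set ℕ)ᶜ = {n | k n < M} := by
        ext n; simp [not_le]
      rwa [h2] at h1
    obtain ⟨k0, _, hk0⟩ := ultra_fiber U k (Finset.range M) (by
      refine Filter.mem_of_superset hcomp ?_
      intro n hn; simpa [Finset.mem_range] using hn)
    have hper1 : ∀ i : ℤ, piR x' (i - k0) = piR x' (i + 1) := by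
      intro i
      obtain ⟨n, hn1, hn2⟩ := Filter.nonempty_of_mem (Filter.inter_mem hk0 (habs i))
      have hn1' : k n = k0 := hn1
      have h := hk n i hn2
      rw [hn1'] at h
      exact h
    set p : ℤ := (k0 : ℤ) + 1 with hpdef
    have hp1 : 1 ≤ p := by omega
    have hperx : ∀ j : ℤ, piR x' (j - p) = piR x' j := by
      intro j
      have h := hper1 (j - 1)
      rw [show j - 1 - (k0 : ℤ) = j - p from by rw [hpdef]; ring,
        show j - 1 + 1 = j from by ring] at h
      exact h
    have hmultx : ∀ (m : ℕ) (j : ℤ), piR x' (j - m * p) = piR x' j := by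
      intro m
      induction m with
      | zero => intro j; simp
      | succ m ih =>
        intro j
        rw [show j - ((m + 1 : ℕ) : ℤ) * p = (j - m * p) - p from by push_cast; ring,
          hperx (j - m * p), ih j]
    choose l hl using fun n : ℕ => hxt.2 (piR y') hyt.1 n
    obtain ⟨r0, _, hr0⟩ := ultra_fiber U (fun n => l n % (k0 + 1)) (Finset.range (k0 + 1))
      (by
        have h : {n : ℕ | l n % (k0 + 1) ∈ Finset.range (k0 + 1)} = Set.univ := by
          ext n; simp [Nat.mod_lt _ (Nat.succ_pos k0)]
        rw [h]; exact Filter.univ_mem)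
    have hyx : ∀ i : ℤ, piR y' i = piR x' (i - r0) := by
      intro i
      obtain ⟨n, hn1, hn2⟩ := Filter.nonempty_of_mem (Filter.inter_mem hr0 (habs i))
      have hn1' : l n % (k0 + 1) = r0 := hn1
      have h : piR x' (i - l n) = piR y' i := hl n i hn2
      obtain ⟨q, hq⟩ : ∃ q : ℕ, (l n : ℤ) = (q : ℤ) * p + r0 := by
        refine ⟨l n / (k0 + 1), ?_⟩
        have h' := Nat.div_add_mod (l n) (k0 + 1)
        rw [hn1'] at h'
        have h2 : l n = (l n / (k0 + 1)) * (k0 + 1) + r0 := by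
          rw [Nat.mul_comm] at h'; exact h'.symm
        rw [hpdef]
        exact_mod_cast h2
      rw [hq, show i - ((q : ℤ) * p + r0) = (i - r0) - (q : ℤ) * p from by ring] at h
      rw [← h, hmultx]
    have hpery : ∀ j : ℤ, piR y' (j - p) = piR y' j := by
      intro j
      rw [hyx, hyx j, show j - p - (r0 : ℤ) = (j - r0) - p from by ring, hperx]
    have hmulty : ∀ (m : ℕ) (j : ℤ), piR y' (j - m * p) = piR y' j := by
      intro m
      induction m with
      | zero => intro j; simp
      | succ m ih =>
        intro j
        rw [show j - ((m + 1 : ℕ) : ℤ) * p = (j - m * p) - p from by push_cast; ring,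
          hpery (j - m * p), ih j]
    have heq : piR x' = piR y' := by
      funext i
      set m : ℕ := (i - N).toNat with hmdef
      have hmge : i - N ≤ (m : ℤ) := Int.self_le_toNat _
      have hmp : (m : ℤ) ≤ (m : ℤ) * p := le_mul_of_one_le_right (Int.natCast_nonneg m) hp1
      have hle : i - (m : ℤ) * p ≤ N := by linarith
      rw [← hmultx m i, ← hmulty m i, hagree _ hle]
    obtain ⟨z, _, huniq⟩ := h11 (piR x') hxt
    have hxy : x' = y' := by
      rw [huniq x' ⟨hx', rfl⟩, huniq y' ⟨hy', heq.symm⟩]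
    exact hne (by rw [hxy])
end
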